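/- Let p be an odd prime, r ∈ ℤ_p with v_p(r) = α > 0, and let β be an even nonnegative integer with β < α. Then the Haar measure of the set of pairs (a,b) ∈ ℤ_p² such that ab + r is a square in ℤ_p and v_p(ab+r) = β equals (β+1)(p-1)²/(2 p^{β+2}). -/

import Mathlib

/-!
Write `a = p^i u` and `b = p^j v` with units `u, v`. Since `v_p(r) > β`, the condition
`v_p(ab + r) = β` forces `i + j = β`, and then `ab + r = p^β (uv + p r')` where `r = p^(β+1) r'`.
As `β` is even and `p` is odd, Hensel's lemma makes this a square iff `ū v̄` is a square in `𝔽_p`.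
So, up to the null set `{ab = -r}`, the set is the disjoint union over `i ≤ β` and over pairs
`(c, d) ∈ (𝔽_p^×)²` with `cd` a square of the boxes `{p^i u : ū = c} × {p^(β-i) v : v̄ = d}`,
each of measure `p^-(β+2)`. Writing `2 · 1[cd is a nonzero square] = χ(c)²χ(d)² + χ(c)χ(d)` with
the quadratic character `χ` shows that there are `(p-1)²/2` such pairs.
-/

open MeasureTheory

noncomputable instance (p : ℕ) [Fact p.Prime] : MeasurableSpace ℤ_[p] := borel _
instance (p : ℕ) [Fact p.Prime] : BorelSpace ℤ_[p] := ⟨rfl⟩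

/-- The Haar measure on ℤ_p, normalized so that μ(ℤ_p) = 1. -/
noncomputable def μZp (p : ℕ) [Fact p.Prime] : Measure ℤ_[p] :=
  Measure.addHaarMeasure ⊤

open PadicInt Polynomial Function Finset
open scoped ENNReal Topology

universe u

theorem HenselianLocalRing.isSquare_iff_of_surjective {R K : Type u} [CommRing R]
    [HenselianLocalRing R] [Field K] (φ : R →+* K) (hφ : Surjective φ) (h2 : (2 : K) ≠ 0)
    {u : R} (hu : φ u ≠ 0) : IsSquare u ↔ IsSquare (φ u) := by
  refine ⟨fun h => h.map φ, fun ⟨t, ht⟩ => ?_⟩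
  have ht0 : t ≠ 0 := by rintro rfl; exact hu (by simpa using ht)
  have hensel := ((HenselianLocalRing.TFAE R).out 0 2).mp ‹_›
  obtain ⟨a, ha, -⟩ := hensel φ hφ (X ^ 2 - C u) (monic_X_pow_sub_C u two_ne_zero) t
    (by simp [ht, sq]) (by simp [ht0, h2, one_add_one_eq_two, map_ofNat])
  exact ⟨a, by simpa [sub_eq_zero, sq, eq_comm] using ha⟩

def nonzeroSquarePairs (F : Type*) [Field F] [Fintype F] [DecidableEq F] : Finset (F × F) :=
  {cd | cd.1 ≠ 0 ∧ cd.2 ≠ 0 ∧ IsSquare (cd.1 * cd.2)}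

theorem two_mul_card_nonzeroSquarePairs {F : Type*} [Field F] [Fintype F] [DecidableEq F]
    (hF : ringChar F ≠ 2) : 2 * #(nonzeroSquarePairs F) = (Fintype.card F - 1) ^ 2 := by
  set χ := quadraticChar F
  have hsq : ∀ c : F, χ c ^ 2 = if c = 0 then 0 else 1 := by
    intro c
    split_ifs with hc
    · simp [χ, hc]
    · exact quadraticChar_sq_one hc
  have hpt : ∀ cd : F × F, (if cd.1 ≠ 0 ∧ cd.2 ≠ 0 ∧ IsSquare (cd.1 * cd.2) then 2 else 0 : ℤ)
      = χ cd.1 ^ 2 * χ cd.2 ^ 2 + χ cd.1 * χ cd.2 := by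
    rintro ⟨c, d⟩
    rcases eq_or_ne c 0 with rfl | hc
    · simp [χ]
    rcases eq_or_ne d 0 with rfl | hd
    · simp [χ]
    rw [hsq, hsq, ← map_mul]
    by_cases hs : IsSquare (c * d)
    · simp [hc, hd, hs, χ, (quadraticChar_one_iff_isSquare (mul_ne_zero hc hd)).2 hs]
    · simp [hc, hd, hs, χ, quadraticChar_neg_one_iff_not_isSquare.2 hs]
  have hcard : ∑ c : F, χ c ^ 2 = (Fintype.card F - 1 : ℕ) := by
    simp [hsq, sum_ite, filter_ne', Fintype.card_pos]
  zify
  unfold nonzeroSquarePairs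
  calc 2 * (#{cd : F × F | cd.1 ≠ 0 ∧ cd.2 ≠ 0 ∧ IsSquare (cd.1 * cd.2)} : ℤ)
      = ∑ cd : F × F, (if cd.1 ≠ 0 ∧ cd.2 ≠ 0 ∧ IsSquare (cd.1 * cd.2) then 2 else 0 : ℤ) := by
        rw [natCast_card_filter, mul_sum]
        simp only [mul_ite, mul_one, mul_zero]
    _ = ∑ cd : F × F, (χ cd.1 ^ 2 * χ cd.2 ^ 2 + χ cd.1 * χ cd.2) :=
        sum_congr rfl fun cd _ => hpt cd
    _ = (∑ c, χ c ^ 2) ^ 2 + (∑ c, χ c) ^ 2 := by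
        rw [Fintype.sum_prod_type, sq, sq, sum_mul_sum, sum_mul_sum, ← sum_add_distrib]
        simp only [sum_add_distrib]
    _ = ((Fintype.card F - 1 : ℕ) : ℤ) ^ 2 := by rw [hcard, quadraticChar_sum_zero hF]; ring

theorem card_mul_measure_preimage_singleton {G H : Type*} [AddGroup G] [MeasurableSpace G]
    [MeasurableAdd G] {μ : Measure G} [μ.IsAddLeftInvariant] [AddGroup H] [Fintype H]
    (f : G →+ H) (hf : Surjective f) (hmeas : ∀ h, MeasurableSet (f ⁻¹' {h})) (h : H) :
    Fintype.card H * μ (f ⁻¹' {h}) = μ Set.univ := by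
  have hfiber : ∀ h', μ (f ⁻¹' {h'}) = μ (f ⁻¹' {0}) := by
    intro h'
    obtain ⟨g, rfl⟩ := hf h'
    rw [← measure_preimage_add μ g (f ⁻¹' {f g})]
    congr 1
    ext x
    simp
  calc Fintype.card H * μ (f ⁻¹' {h}) = ∑ h', μ (f ⁻¹' {h'}) := by simp [hfiber]
    _ = μ Set.univ := by
      rw [sum_measure_preimage_singleton _ fun y _ => hmeas y, coe_univ, Set.preimage_univ]

theorem measure_prod_setOf_mul_eq_null {R : Type*} [MulZeroClass R] [IsLeftCancelMulZero R]
    [MeasurableSpace R] [MeasurableMul₂ R] [MeasurableSingletonClass R] (μ ν : Measure R)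
    [SFinite ν] [NullSingletonClass ν] {c : R} (hc : c ≠ 0) : μ.prod ν {x | x.1 * x.2 = c} = 0 := by
  refine (Measure.measure_prod_null ((measurable_fst.mul measurable_snd)
    (measurableSet_singleton c))).2 (Filter.Eventually.of_forall fun a => ?_)
  refine Set.Subsingleton.measure_zero ?_ ν
  intro b hb b' hb'
  have ha : a ≠ 0 := by rintro rfl; exact hc (by simpa using hb.symm)
  exact mul_left_cancel₀ ha (hb.trans hb'.symm)

namespace PadicInt

variable {p : ℕ} [Fact p.Prime]

instance : HenselianLocalRing ℤ_[p] where
  is_henselian f hf a₀ h₁ h₂ := HenselianRing.is_henselian f hf a₀ h₁ (h₂.map _)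

-- makes Haar measures on `ℤ_[p]` atomless
instance : (𝓝[≠] (0 : ℤ_[p])).NeBot :=
  mem_closure_iff_nhdsWithin_neBot.mp <| mem_closure_of_tendsto
    (tendsto_pow_atTop_nhds_zero_of_norm_lt_one
      (by rw [norm_p, ← Padic.norm_p]; exact Padic.norm_p_lt_one))
    (Filter.Eventually.of_forall fun n => pow_ne_zero n (NeZero.ne (p : ℤ_[p])))

theorem toZMod_eq_toZMod_iff {x y : ℤ_[p]} : toZMod x = toZMod y ↔ (p : ℤ_[p]) ∣ x - y := by
  rw [← sub_eq_zero, ← map_sub, ← RingHom.mem_ker, ker_toZMod, maximalIdeal_eq_span_p,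
    Ideal.mem_span_singleton]

theorem toZModPow_eq_toZModPow_iff {n : ℕ} {x y : ℤ_[p]} :
    toZModPow n x = toZModPow n y ↔ (p : ℤ_[p]) ^ n ∣ x - y := by
  rw [← sub_eq_zero, ← map_sub, ← RingHom.mem_ker, ker_toZModPow, Ideal.mem_span_singleton]

theorem isUnit_iff_toZMod_ne_zero {x : ℤ_[p]} : IsUnit x ↔ toZMod x ≠ 0 := by
  rw [Ne, ← RingHom.mem_ker, ker_toZMod, IsLocalRing.mem_maximalIdeal, mem_nonunits_iff, not_not]

theorem isSquare_iff_isSquare_toZMod (hp : p ≠ 2) {u : ℤ_[p]} (hu : IsUnit u) :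
    IsSquare u ↔ IsSquare (toZMod u) :=
  HenselianLocalRing.isSquare_iff_of_surjective _ (ZMod.ringHom_surjective _)
    (Ring.two_ne_zero (by rwa [ZMod.ringChar_zmod_n])) (isUnit_iff_toZMod_ne_zero.1 hu)

theorem valuation_eq_zero_of_isUnit {u : ℤ_[p]} (hu : IsUnit u) : u.valuation = 0 := by
  obtain ⟨w, rfl⟩ := hu
  have h := congrArg valuation w.mul_inv
  rw [valuation_mul w.ne_zero w⁻¹.ne_zero, valuation_one] at h
  omega

theorem valuation_neg (x : ℤ_[p]) : (-x).valuation = x.valuation := by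
  rcases eq_or_ne x 0 with rfl | hx
  · simp
  rw [neg_eq_neg_one_mul, valuation_mul (neg_ne_zero.2 one_ne_zero) hx,
    valuation_eq_zero_of_isUnit isUnit_one.neg, zero_add]

theorem valuation_add_eq_of_lt {x y : ℤ_[p]} (hx : x ≠ 0) (h : x.valuation < y.valuation) :
    (x + y).valuation = x.valuation := by
  have hxy : x + y ≠ 0 := by
    intro h0
    rw [eq_neg_of_add_eq_zero_right h0, valuation_neg] at h
    exact lt_irrefl _ h
  have h₁ := le_valuation_add hxy
  have h₂ := le_valuation_add (x := x + y) (y := -y) (by simpa using hx)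
  rw [add_neg_cancel_right, valuation_neg] at h₂
  omega

theorem valuation_p_pow_mul_of_isUnit (n : ℕ) {u : ℤ_[p]} (hu : IsUnit u) :
    ((p : ℤ_[p]) ^ n * u).valuation = n := by
  rw [valuation_p_pow_mul n u hu.ne_zero, valuation_eq_zero_of_isUnit hu, add_zero]

theorem isSquare_p_pow_mul_iff {n : ℕ} (hn : Even n) {u : ℤ_[p]} (hu : IsUnit u) :
    IsSquare ((p : ℤ_[p]) ^ n * u) ↔ IsSquare u := by
  obtain ⟨m, rfl⟩ := hn
  refine ⟨fun ⟨s, hs⟩ => ?_, fun ⟨t, ht⟩ => ⟨(p : ℤ_[p]) ^ m * t, by rw [ht]; ring⟩⟩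
  have hs0 : s ≠ 0 := by
    rintro rfl
    exact mul_ne_zero (pow_ne_zero _ (NeZero.ne _)) hu.ne_zero (hs.trans (mul_zero 0))
  have hval : s.valuation = m := by
    have h := congrArg valuation hs
    rw [valuation_p_pow_mul_of_isUnit _ hu, valuation_mul hs0 hs0] at h
    omega
  have hs' := unitCoeff_spec hs0
  rw [hval] at hs'
  generalize (unitCoeff hs0 : ℤ_[p]) = w at hs' ⊢
  refine ⟨w, mul_left_cancel₀ (pow_ne_zero (m + m) (NeZero.ne (p : ℤ_[p]))) ?_⟩
  rw [hs, hs']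
  ring

theorem p_pow_valuation_mul_unitCoeff {x : ℤ_[p]} (hx : x ≠ 0) :
    (p : ℤ_[p]) ^ x.valuation * unitCoeff hx = x := by
  rw [mul_comm]
  exact (unitCoeff_spec hx).symm

theorem isSquare_and_valuation_iff (hp : p ≠ 2) {β i j : ℕ} (hβ : Even β) (hij : i + j = β)
    {r : ℤ_[p]} (hr : β < r.valuation) {u v : ℤ_[p]} (hu : IsUnit u) (hv : IsUnit v) :
    (IsSquare ((p : ℤ_[p]) ^ i * u * ((p : ℤ_[p]) ^ j * v) + r) ∧
        ((p : ℤ_[p]) ^ i * u * ((p : ℤ_[p]) ^ j * v) + r).valuation = β) ↔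
      IsSquare (toZMod u * toZMod v) := by
  have hr0 : r ≠ 0 := by rintro rfl; simp at hr
  obtain ⟨r', hr'⟩ :=
    Ideal.mem_span_singleton.1 ((mem_span_pow_iff_le_valuation r hr0 (β + 1)).2 hr)
  set w := u * v + p * r'
  have hw : toZMod w = toZMod u * toZMod v := by simp [w]
  have hwu : IsUnit w := isUnit_iff_toZMod_ne_zero.2 <| by
    rw [hw]
    exact mul_ne_zero (isUnit_iff_toZMod_ne_zero.1 hu) (isUnit_iff_toZMod_ne_zero.1 hv)
  have key : (p : ℤ_[p]) ^ i * u * ((p : ℤ_[p]) ^ j * v) + r = (p : ℤ_[p]) ^ β * w := by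
    rw [hr', ← hij]
    ring
  rw [key, valuation_p_pow_mul_of_isUnit _ hwu, isSquare_p_pow_mul_iff hβ hwu,
    isSquare_iff_isSquare_toZMod hp hwu, hw, and_iff_left rfl]

variable (p) in
def leadingTermSet (i : ℕ) (c : ZMod p) : Set ℤ_[p] :=
  (fun u => (p : ℤ_[p]) ^ i * u) '' (toZMod ⁻¹' {c})

theorem mem_leadingTermSet_valuation {x : ℤ_[p]} (hx : x ≠ 0) :
    x ∈ leadingTermSet p x.valuation (toZMod (unitCoeff hx : ℤ_[p])) :=
  ⟨unitCoeff hx, rfl, p_pow_valuation_mul_unitCoeff hx⟩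

theorem leadingTermSet_toZMod (i : ℕ) (x : ℤ_[p]) :
    leadingTermSet p i (toZMod x) =
      toZModPow (i + 1) ⁻¹' {toZModPow (i + 1) ((p : ℤ_[p]) ^ i * x)} := by
  ext a
  simp only [leadingTermSet, Set.mem_image, Set.mem_preimage, Set.mem_singleton_iff,
    toZMod_eq_toZMod_iff, toZModPow_eq_toZModPow_iff]
  constructor
  · rintro ⟨u, ⟨t, ht⟩, rfl⟩
    exact ⟨t, by rw [← mul_sub, ht]; ring⟩
  · rintro ⟨t, ht⟩
    exact ⟨x + p * t, ⟨t, by ring⟩, by linear_combination -ht⟩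

theorem eq_of_mem_leadingTermSet {i j : ℕ} {c d : ZMod p} (hc : c ≠ 0) (hd : d ≠ 0) {x : ℤ_[p]}
    (hi : x ∈ leadingTermSet p i c) (hj : x ∈ leadingTermSet p j d) : i = j ∧ c = d := by
  obtain ⟨u, rfl, rfl⟩ := hi
  obtain ⟨v, rfl, h⟩ := hj
  have hu : IsUnit u := isUnit_iff_toZMod_ne_zero.2 hc
  have hv : IsUnit v := isUnit_iff_toZMod_ne_zero.2 hd
  obtain rfl : j = i := by
    simpa [valuation_p_pow_mul_of_isUnit _ hu, valuation_p_pow_mul_of_isUnit _ hv] using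
      congrArg valuation h
  exact ⟨rfl, congrArg toZMod (mul_left_cancel₀ (pow_ne_zero _ (NeZero.ne _)) h).symm⟩

theorem measurableSet_preimage_toZModPow (n : ℕ) (z : ZMod (p ^ n)) :
    MeasurableSet (toZModPow n ⁻¹' {z} : Set ℤ_[p]) := by
  obtain ⟨y, rfl⟩ := ZMod.ringHom_surjective (toZModPow n) z
  have : toZModPow n ⁻¹' {toZModPow n y} = Metric.closedBall y ((p : ℝ) ^ (-n : ℤ)) := by
    ext x
    rw [Set.mem_preimage, Set.mem_singleton_iff, toZModPow_eq_toZModPow_iff,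
      Metric.mem_closedBall, dist_eq_norm, norm_le_pow_iff_mem_span_pow, Ideal.mem_span_singleton]
  rw [this]
  exact Metric.isClosed_closedBall.measurableSet

theorem measurableSet_leadingTermSet (i : ℕ) (c : ZMod p) :
    MeasurableSet (leadingTermSet p i c) := by
  obtain ⟨x, rfl⟩ := ZMod.ringHom_surjective toZMod c
  rw [leadingTermSet_toZMod]
  exact measurableSet_preimage_toZModPow _ _

variable (p) in
def leadingTermRect (β : ℕ) (t : ℕ × ZMod p × ZMod p) : Set (ℤ_[p] × ℤ_[p]) :=
  leadingTermSet p t.1 t.2.1 ×ˢ leadingTermSet p (β - t.1) t.2.2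

variable (p) in
def leadingTermIndex (β : ℕ) : Finset (ℕ × ZMod p × ZMod p) :=
  range (β + 1) ×ˢ nonzeroSquarePairs (ZMod p)

theorem mem_leadingTermIndex {β : ℕ} {t : ℕ × ZMod p × ZMod p} :
    t ∈ leadingTermIndex p β ↔
      t.1 ≤ β ∧ t.2.1 ≠ 0 ∧ t.2.2 ≠ 0 ∧ IsSquare (t.2.1 * t.2.2) := by
  simp [leadingTermIndex, nonzeroSquarePairs]

variable {β : ℕ} {r : ℤ_[p]}

theorem leadingTermRect_subset (hp : p ≠ 2) (hβ : Even β) (hr : β < r.valuation)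
    {t : ℕ × ZMod p × ZMod p} (ht : t ∈ leadingTermIndex p β) :
    leadingTermRect p β t ⊆
      {x | IsSquare (x.1 * x.2 + r) ∧ (x.1 * x.2 + r).valuation = β} := by
  obtain ⟨i, c, d⟩ := t
  obtain ⟨hi, hc, hd, hcd⟩ := mem_leadingTermIndex.1 ht
  rintro ⟨-, -⟩ ⟨⟨u, rfl, rfl⟩, ⟨v, rfl, rfl⟩⟩
  exact (isSquare_and_valuation_iff hp hβ (Nat.add_sub_cancel' hi) hr
    (isUnit_iff_toZMod_ne_zero.2 hc) (isUnit_iff_toZMod_ne_zero.2 hd)).2 hcd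

theorem exists_mem_leadingTermRect (hp : p ≠ 2) (hβ : Even β) (hr : β < r.valuation)
    {a b : ℤ_[p]} (hy : a * b + r ≠ 0) (h : IsSquare (a * b + r) ∧ (a * b + r).valuation = β) :
    ∃ t ∈ leadingTermIndex p β, (a, b) ∈ leadingTermRect p β t := by
  have hval : (a * b).valuation = β := by
    have h' := valuation_add_eq_of_lt hy (y := -r) (by rwa [valuation_neg, h.2])
    rwa [add_neg_cancel_right, h.2] at h'
  have hab : a * b ≠ 0 := by
    rintro h0
    rw [h0, zero_add] at h
    omega
  obtain ⟨ha, hb⟩ := mul_ne_zero_iff.1 hab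
  rw [valuation_mul ha hb] at hval
  have hsq := (isSquare_and_valuation_iff hp hβ hval hr (unitCoeff ha).isUnit
    (unitCoeff hb).isUnit).1 <| by
      rwa [p_pow_valuation_mul_unitCoeff, p_pow_valuation_mul_unitCoeff]
  refine ⟨(a.valuation, toZMod (unitCoeff ha : ℤ_[p]), toZMod (unitCoeff hb : ℤ_[p])),
    mem_leadingTermIndex.2 ⟨by omega, ?_, ?_, hsq⟩, mem_leadingTermSet_valuation ha, ?_⟩
  · exact isUnit_iff_toZMod_ne_zero.1 (unitCoeff ha).isUnit
  · exact isUnit_iff_toZMod_ne_zero.1 (unitCoeff hb).isUnit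
  · rw [← hval, Nat.add_sub_cancel_left]
    exact mem_leadingTermSet_valuation hb

theorem pairwiseDisjoint_leadingTermRect :
    (leadingTermIndex p β : Set (ℕ × ZMod p × ZMod p)).PairwiseDisjoint (leadingTermRect p β) := by
  rintro ⟨i, c, d⟩ ht ⟨i', c', d'⟩ ht' hne
  obtain ⟨-, hc, hd, -⟩ := mem_leadingTermIndex.1 ht
  obtain ⟨-, hc', hd', -⟩ := mem_leadingTermIndex.1 ht'
  refine Set.disjoint_left.2 fun ⟨a, b⟩ ⟨ha, hb⟩ ⟨ha', hb'⟩ => hne ?_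
  obtain ⟨rfl, rfl⟩ := eq_of_mem_leadingTermSet hc hc' ha ha'
  obtain ⟨-, rfl⟩ := eq_of_mem_leadingTermSet hd hd' hb hb'
  rfl

end PadicInt

section

variable {p : ℕ} [Fact p.Prime]

instance : (μZp p).IsAddHaarMeasure := by
  unfold μZp
  infer_instance

theorem μZp_univ : μZp p Set.univ = 1 := by
  rw [μZp, ← TopologicalSpace.PositiveCompacts.coe_top, Measure.addHaarMeasure_self]

theorem μZp_preimage_toZModPow (n : ℕ) (z : ZMod (p ^ n)) :
    μZp p (toZModPow n ⁻¹' {z}) = (p : ℝ≥0∞)⁻¹ ^ n := by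
  have h := card_mul_measure_preimage_singleton (μ := μZp p) (toZModPow n).toAddMonoidHom
    (ZMod.ringHom_surjective _) (measurableSet_preimage_toZModPow n) z
  rw [ZMod.card, μZp_univ, Nat.cast_pow, mul_comm] at h
  rw [← ENNReal.inv_pow]
  exact ENNReal.eq_inv_of_mul_eq_one_left h

theorem μZp_leadingTermSet (i : ℕ) (c : ZMod p) :
    μZp p (leadingTermSet p i c) = (p : ℝ≥0∞)⁻¹ ^ (i + 1) := by
  obtain ⟨x, rfl⟩ := ZMod.ringHom_surjective toZMod c
  rw [leadingTermSet_toZMod, μZp_preimage_toZModPow]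

theorem μZp_prod_leadingTermRect {β : ℕ} {t : ℕ × ZMod p × ZMod p} (ht : t.1 ≤ β) :
    (μZp p).prod (μZp p) (leadingTermRect p β t) = (p : ℝ≥0∞)⁻¹ ^ (β + 2) := by
  rw [leadingTermRect, Measure.prod_prod, μZp_leadingTermSet, μZp_leadingTermSet, ← pow_add]
  congr 1
  omega

theorem μZp_prod_setOf_isSquare_valuation_eq (hp : p ≠ 2) {β : ℕ} (hβ : Even β) {r : ℤ_[p]}
    (hr : β < r.valuation) :
    (μZp p).prod (μZp p) {x | IsSquare (x.1 * x.2 + r) ∧ (x.1 * x.2 + r).valuation = β}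
      = ((β + 1) * #(nonzeroSquarePairs (ZMod p)) : ℕ) * (p : ℝ≥0∞)⁻¹ ^ (β + 2) := by
  have hr0 : r ≠ 0 := by rintro rfl; simp at hr
  set T : Set (ℤ_[p] × ℤ_[p]) := {x | IsSquare (x.1 * x.2 + r) ∧ (x.1 * x.2 + r).valuation = β}
  set U := ⋃ t ∈ leadingTermIndex p β, leadingTermRect p β t
  have hUT : U ⊆ T := Set.iUnion₂_subset fun t ht => leadingTermRect_subset hp hβ hr ht
  have hTU : T \ U ⊆ {x | x.1 * x.2 = -r} := by
    rintro ⟨a, b⟩ ⟨hT, hU⟩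
    by_contra hy
    obtain ⟨t, ht, hab⟩ :=
      exists_mem_leadingTermRect hp hβ hr (mt eq_neg_of_add_eq_zero_left hy) hT
    exact hU (Set.mem_biUnion ht hab)
  calc (μZp p).prod (μZp p) T = (μZp p).prod (μZp p) U :=
        (measure_eq_measure_of_null_sdiff hUT (measure_mono_null hTU
          (measure_prod_setOf_mul_eq_null _ _ (neg_ne_zero.2 hr0)))).symm
    _ = ∑ t ∈ leadingTermIndex p β, (μZp p).prod (μZp p) (leadingTermRect p β t) :=
        measure_biUnion_finset pairwiseDisjoint_leadingTermRect fun t _ =>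
          (measurableSet_leadingTermSet _ _).prod (measurableSet_leadingTermSet _ _)
    _ = _ := by
        rw [sum_congr rfl fun t ht => μZp_prod_leadingTermRect (mem_leadingTermIndex.1 ht).1,
          sum_const, leadingTermIndex, card_product, card_range, nsmul_eq_mul]

end

theorem stmt7_general (p : ℕ) [Fact p.Prime] (hp : p ≠ 2) (r : ℤ_[p]) (α : ℕ)
    (hr : r.valuation = α) (β : ℕ) (hβeven : Even β) (hβ : β < α) :
    (((μZp p).prod (μZp p)) {x : ℤ_[p] × ℤ_[p] |
        IsSquare (x.1 * x.2 + r) ∧ (x.1 * x.2 + r).valuation = β}).toReal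
      = ((β:ℝ) + 1) * ((p:ℝ) - 1)^2 / (2 * (p:ℝ) ^ (β + 2)) := by
  have hcount := two_mul_card_nonzeroSquarePairs (F := ZMod p) (by rwa [ZMod.ringChar_zmod_n])
  rw [ZMod.card] at hcount
  have hcount' : 2 * (#(nonzeroSquarePairs (ZMod p)) : ℝ) = ((p : ℝ) - 1) ^ 2 := by
    have h := congrArg (Nat.cast : ℕ → ℝ) hcount
    push_cast [Nat.cast_sub (Fact.out : p.Prime).one_le] at h
    exact h
  rw [μZp_prod_setOf_isSquare_valuation_eq hp hβeven (hr ▸ hβ)]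
  simp only [ENNReal.toReal_mul, ENNReal.toReal_natCast, ENNReal.toReal_pow, ENNReal.toReal_inv]
  rw [← hcount']
  field_simp
  push_cast
  ring

theorem stmt7 (p : ℕ) [Fact p.Prime] (hp : p ≠ 2) (r : ℤ_[p]) (α : ℕ) (hα : 0 < α)
    (hr : r.valuation = α) (β : ℕ) (hβeven : Even β) (hβ : β < α) :
    (((μZp p).prod (μZp p)) {x : ℤ_[p] × ℤ_[p] |
        IsSquare (x.1 * x.2 + r) ∧ (x.1 * x.2 + r).valuation = β}).toReal
      = ((β:ℝ) + 1) * ((p:ℝ) - 1)^2 / (2 * (p:ℝ) ^ (β + 2)) :=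
  stmt7_general p hp r α hr β hβeven hβ
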